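/- Let α ∈ (0, π/2) and set C_α := (α/π)² + (1 − α/π)². Let N^v, N^b be natural numbers, let n⁰ : {1, …, N^v} → ℤ and n⁻, n⁺ : {1, …, N^b} → ℤ be families of integers, and let D := Σ_{j=1}^{N^v} n⁰_j + Σ_{i=1}^{N^b} (n⁻_i + n⁺_i). Suppose D > 0. Then equality Σ_{j=1}^{N^v} (n⁰_j)² + Σ_{i=1}^{N^b} [ (n⁻_i + α/π)² + (n⁺_i − α/π)² ] = |D| · C_α holds if and only if n⁰_j = 0 for all j, N^b = D, and n⁻_i = 0 and n⁺_i = 1 for every i = 1, …, N^b. -/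

import Mathlib

/-!
Write `t = α/π ∈ (0, 1)` and `C = t² + (1 - t)²`. After subtracting `C · D`, each summand becomes a
product `k (k - c)` with `k` an integer (`n⁰_j`, `n⁻_i` or `n⁺_i - 1`) and `c` one of `C`, `C - 2t`,
`2t² - 1`, all in `(-1, 1)`; such a product is nonnegative and vanishes only for `k = 0`. So equality
forces every summand to vanish, and then `D = Σ (0 + 1) = N^b`.
-/

open Finset

lemma int_mul_sub_nonneg {c : ℝ} (hc : |c| < 1) (n : ℤ) : 0 ≤ (n : ℝ) * (n - c) := by
  obtain ⟨hc₁, hc₂⟩ := abs_lt.mp hc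
  rcases lt_trichotomy n 0 with hn | rfl | hn
  · have : (n : ℝ) ≤ -1 := by exact_mod_cast Int.le_sub_one_of_lt hn
    exact mul_nonneg_of_nonpos_of_nonpos (by linarith) (by linarith)
  · simp
  · have : (1 : ℝ) ≤ n := by exact_mod_cast hn
    exact mul_nonneg (by linarith) (by linarith)

lemma int_mul_sub_eq_zero_iff {c : ℝ} (hc : |c| < 1) (n : ℤ) :
    (n : ℝ) * (n - c) = 0 ↔ n = 0 := by
  refine ⟨fun h => ?_, fun h => by simp [h]⟩
  rcases mul_eq_zero.mp h with h | h
  · exact_mod_cast h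
  · rw [sub_eq_zero] at h
    rw [← h] at hc
    exact Int.abs_lt_one_iff.mp (by exact_mod_cast hc)

theorem sum_sq_add_sum_pair_eq_mul_sum_iff {ι κ : Type*} [Fintype ι] [Fintype κ] {t : ℝ}
    (ht : t ∈ Set.Ioo 0 1) (n0 : ι → ℤ) (nm np : κ → ℤ) :
    (∑ j, (n0 j : ℝ) ^ 2) + ∑ i, (((nm i : ℝ) + t) ^ 2 + ((np i : ℝ) - t) ^ 2) =
        (t ^ 2 + (1 - t) ^ 2) * ((∑ j, (n0 j : ℝ)) + ∑ i, ((nm i : ℝ) + np i)) ↔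
      (∀ j, n0 j = 0) ∧ ∀ i, nm i = 0 ∧ np i = 1 := by
  obtain ⟨ht₀, ht₁⟩ := ht
  set C := t ^ 2 + (1 - t) ^ 2
  have hc₀ : |C| < 1 := abs_lt.mpr ⟨by nlinarith, by nlinarith⟩
  have hc₁ : |C - 2 * t| < 1 := abs_lt.mpr ⟨by nlinarith, by nlinarith⟩
  have hc₂ : |2 * t ^ 2 - 1| < 1 := abs_lt.mpr ⟨by nlinarith, by nlinarith⟩
  have hpair_excess : ∀ m p : ℤ, ((m : ℝ) + t) ^ 2 + ((p : ℝ) - t) ^ 2 - C * (m + p) =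
      m * (m - (C - 2 * t)) + ((p - 1 : ℤ) : ℝ) * ((p - 1 : ℤ) - (2 * t ^ 2 - 1)) := by
    intro m p; push_cast; ring
  have hexcess : (∑ j, (n0 j : ℝ) ^ 2) + ∑ i, (((nm i : ℝ) + t) ^ 2 + ((np i : ℝ) - t) ^ 2) -
      C * ((∑ j, (n0 j : ℝ)) + ∑ i, ((nm i : ℝ) + np i)) =
      (∑ j, (n0 j : ℝ) * (n0 j - C)) +
        ∑ i, ((nm i : ℝ) * (nm i - (C - 2 * t)) +
          ((np i - 1 : ℤ) : ℝ) * ((np i - 1 : ℤ) - (2 * t ^ 2 - 1))) := by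
    simp only [← hpair_excess, show ∀ n : ℝ, n * (n - C) = n ^ 2 - C * n from fun n => by ring,
      sum_sub_distrib, ← mul_sum, sum_add_distrib]
    ring
  rw [← sub_eq_zero, hexcess,
    add_eq_zero_iff_of_nonneg (sum_nonneg fun j _ => int_mul_sub_nonneg hc₀ _)
      (sum_nonneg fun i _ => add_nonneg (int_mul_sub_nonneg hc₁ _) (int_mul_sub_nonneg hc₂ _)),
    sum_eq_zero_iff_of_nonneg fun j _ => int_mul_sub_nonneg hc₀ _,
    sum_eq_zero_iff_of_nonneg fun i _ =>
      add_nonneg (int_mul_sub_nonneg hc₁ _) (int_mul_sub_nonneg hc₂ _)]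
  simp only [mem_univ, true_implies, int_mul_sub_eq_zero_iff hc₀,
    add_eq_zero_iff_of_nonneg (int_mul_sub_nonneg hc₁ _) (int_mul_sub_nonneg hc₂ _),
    int_mul_sub_eq_zero_iff hc₁, int_mul_sub_eq_zero_iff hc₂, sub_eq_zero]

open Finset in
/-- The degree lemma (equality case, `D > 0`): equality
`Σ (n⁰)² + Σ [(n⁻ + α/π)² + (n⁺ − α/π)²] = |D|·C_α` holds iff all boundary-vortex
degrees vanish, `N^b = D`, and every pair is `(n⁻, n⁺) = (0, 1)`. -/
theorem degree_lemma_equality_pos (α : ℝ) (hα : α ∈ Set.Ioo 0 (Real.pi / 2))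
    (Nv Nb : ℕ) (n0 : Fin Nv → ℤ) (nm np : Fin Nb → ℤ) (D : ℤ)
    (hD : D = (∑ j, n0 j) + ∑ i, (nm i + np i)) (hDpos : 0 < D) :
    ((∑ j, ((n0 j : ℝ)) ^ 2) +
        ∑ i, (((nm i : ℝ) + α / Real.pi) ^ 2 + ((np i : ℝ) - α / Real.pi) ^ 2) =
      |(D : ℝ)| * ((α / Real.pi) ^ 2 + (1 - α / Real.pi) ^ 2)) ↔
      ((∀ j, n0 j = 0) ∧ (Nb : ℤ) = D ∧ ∀ i, nm i = 0 ∧ np i = 1) := by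
  have ht : α / Real.pi ∈ Set.Ioo 0 1 := by
    obtain ⟨hα₀, hα₁⟩ := hα
    constructor
    · exact div_pos hα₀ Real.pi_pos
    · rw [div_lt_one Real.pi_pos]; linarith [Real.pi_pos]
  have hDabs : |(D : ℝ)| = (∑ j, (n0 j : ℝ)) + ∑ i, ((nm i : ℝ) + np i) := by
    rw [abs_of_pos (by exact_mod_cast hDpos), hD]; push_cast; rfl
  rw [hDabs, mul_comm, sum_sq_add_sum_pair_eq_mul_sum_iff ht]
  refine ⟨fun ⟨h0, hpair⟩ => ⟨h0, ?_, hpair⟩, fun ⟨h0, _, hpair⟩ => ⟨h0, hpair⟩⟩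
  simp [hD, h0, hpair]
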